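/- arXiv:2508.19775 — 9 statements merged into one kernel-verified Lean document; each statement's English description precedes it below -/
import Mathlib

section
/- If the edge sets of q bipartite graphs on vertex set {1,...,n} together cover all edges of the complete graph K_n, then q ≥ log₂ n. -/
open SimpleGraph

/-!
Fix a proper `k`-colouring of each graph of the family. A vertex is sent to the vector of its
colours; two distinct vertices are adjacent in some graph, hence coloured differently there, so
this map is injective and there are at most `k ^ q` vertices. With `k = 2` this is `n ≤ 2 ^ q`.
-/

theorem SimpleGraph.card_le_pow_of_colorable_cover {V ι : Type*} [Fintype V] [Fintype ι] {k : ℕ}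
    (G : ι → SimpleGraph V) (hcol : ∀ m, (G m).Colorable k)
    (hcov : Pairwise fun u v => ∃ m, (G m).Adj u v) :
    Fintype.card V ≤ k ^ Fintype.card ι := by
  let c := fun m => (hcol m).some
  have hinj : Function.Injective fun v m => c m v := by
    intro u v huv
    by_contra hne
    obtain ⟨m, hadj⟩ := hcov hne
    exact (c m).valid hadj (congrFun huv m)
  classical
  simpa using Fintype.card_le_of_injective _ hinj

theorem Real.logb_natCast_le_of_le_pow {b n q : ℕ} (hb : 1 < b) (h : n ≤ b ^ q) :
    Real.logb b n ≤ q := by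
  rcases Nat.eq_zero_or_pos n with rfl | hn
  · simp
  rw [Real.logb_le_iff_le_rpow (by exact_mod_cast hb) (by exact_mod_cast hn), Real.rpow_natCast]
  exact_mod_cast h

/-- If `q` bipartite graphs on `{1,…,n}` together cover all edges of the complete
graph, then `q ≥ log₂ n`. -/
theorem bipartite_cover_log (n q : ℕ) (G : Fin q → SimpleGraph (Fin n))
    (hbip : ∀ j, (G j).Colorable 2)
    (hcov : ∀ i j : Fin n, i ≠ j → ∃ m, (G m).Adj i j) :
    Real.logb 2 n ≤ (q : ℝ) := by
  have hcard : n ≤ 2 ^ q := by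
    simpa using card_le_pow_of_colorable_cover G hbip fun i j => hcov i j
  exact_mod_cast Real.logb_natCast_le_of_le_pow one_lt_two hcard
end

section
/- For natural numbers x < y < z, the position of the most significant differing bit of x and y differs from the position of the most significant differing bit of y and z: m(x,y) ≠ m(y,z). -/
/-- `msb a b` is the position (indexed from 1) of the most significant bit in
which the binary representations of `a` and `b` differ. -/
def msb (a b : ℕ) : ℕ := Nat.size (a ^^^ b)

/-! At the highest bit where `a < b` differ, `b` has a `1` and `a` a `0`. If
`msb x y = msb y z`, that bit is the same position `i` for both pairs, so `y` would have
a `1` at `i` (from `x < y`) and a `0` at `i` (from `y < z`). -/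

namespace Nat

theorem size_eq_log2_add_one {n : ℕ} (hn : n ≠ 0) : n.size = n.log2 + 1 :=
  le_antisymm (size_le.2 lt_log2_self) (lt_size.2 (log2_self_le hn))

theorem testBit_eq_false_of_log2_lt {n j : ℕ} (hj : n.log2 < j) : n.testBit j = false :=
  testBit_lt_two_pow (lt_of_lt_of_le lt_log2_self (Nat.pow_le_pow_right two_pos hj))

theorem testBit_eq_false_and_eq_true_of_lt {a b i : ℕ} (hab : a < b)
    (hi : a.testBit i ≠ b.testBit i) (hagree : ∀ j, i < j → a.testBit j = b.testBit j) :
    a.testBit i = false ∧ b.testBit i = true := by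
  cases ha : a.testBit i <;> cases hb : b.testBit i
  · simp [ha, hb] at hi
  · exact ⟨rfl, rfl⟩
  · exact absurd hab (lt_of_testBit i hb ha fun j hj => (hagree j hj).symm).not_gt
  · simp [ha, hb] at hi

theorem testBit_log2_xor_of_lt {a b : ℕ} (hab : a < b) :
    a.testBit (a ^^^ b).log2 = false ∧ b.testBit (a ^^^ b).log2 = true := by
  refine testBit_eq_false_and_eq_true_of_lt hab ?_ fun j hj => ?_
  · simpa [testBit_xor] using testBit_log2 (xor_ne_zero_iff.2 hab.ne)
  · simpa [testBit_xor] using testBit_eq_false_of_log2_lt hj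

end Nat

theorem msb_eq_log2_xor_add_one {a b : ℕ} (hab : a ≠ b) : msb a b = (a ^^^ b).log2 + 1 :=
  Nat.size_eq_log2_add_one (Nat.xor_ne_zero_iff.2 hab)

theorem msb_ne_of_lt_lt (x y z : ℕ) (hxy : x < y) (hyz : y < z) :
    msb x y ≠ msb y z := by
  intro h
  rw [msb_eq_log2_xor_add_one hxy.ne, msb_eq_log2_xor_add_one hyz.ne, add_left_inj] at h
  have hy_one := (Nat.testBit_log2_xor_of_lt hxy).2
  have hy_zero := (Nat.testBit_log2_xor_of_lt hyz).1
  rw [h, hy_zero] at hy_one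
  exact Bool.false_ne_true hy_one
end

section
/- The chromatic number of J_±(n,2,-1) is at most 2⌈log₂ n⌉ + 2. Explicitly: assign one color to all vertices with both nonzero coordinates equal to +1, one color to all with both equal to -1; color a vertex with value +1 on coordinate a and -1 on coordinate b by the pair (m(a,b), sign), where m(a,b) is the most significant differing bit of a and b and the sign records which of a,b has digit 1 in that bit. This is a proper coloring. -/
open SimpleGraph Finset

/-- Vertices of the Johnson-type graph: vectors in `{-1,0,1}^n` with exactly `k`
nonzero coordinates. -/
def JVert (n k : ℕ) : Type :=
  {v : Fin n → ℤ // (∀ i, v i = -1 ∨ v i = 0 ∨ v i = 1) ∧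
    (Finset.univ.filter (fun i => v i ≠ 0)).card = k}

/-- The Johnson-type graph `J_±(n,k,t)`: edges join pairs with scalar product `t`. -/
def Jpm (n k : ℕ) (t : ℤ) : SimpleGraph (JVert n k) where
  Adj u v := u ≠ v ∧ ∑ i, u.1 i * v.1 i = t
  symm := by
    constructor
    intro u v ⟨h1, h2⟩
    refine ⟨h1.symm, ?_⟩
    rw [← h2]
    exact Finset.sum_congr rfl (fun i _ => mul_comm _ _)
  loopless := by constructor; intro u ⟨h1, _⟩; exact h1 rfl

/-! A vertex `e_a - e_b` is an arc `a → b`; it gets the colour `(m, s)`, where `m` is the most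
significant bit in which `a` and `b` differ and `s` is the digit of `a` there. The vertices
`e_a + e_b` share one colour and so do the vertices `-e_a - e_b`. Adjacent vertices have a
coordinate `i` where one is `1` and the other `-1`, so two adjacent arcs have the form `c → i` and
`i → b`. If both had the colour `(m, s)`, then `i` and `c` would differ at bit `m` while `i` would
have digit `s` there, like `c`. -/

/-- `m(a, b)`; it is `0` when `a = b`. -/
def topDiffBit (a b : ℕ) : ℕ := (a ^^^ b).log2

lemma testBit_topDiffBit_ne {a b : ℕ} (h : a ≠ b) :
    a.testBit (topDiffBit a b) ≠ b.testBit (topDiffBit a b) := by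
  intro heq
  have htop : (a ^^^ b).testBit (topDiffBit a b) := Nat.testBit_log2 (mt xor_eq_zero_iff.mp h)
  rw [Nat.testBit_xor, heq, Bool.xor_self] at htop
  exact Bool.false_ne_true htop

lemma topDiffBit_lt {a b k : ℕ} (ha : a < 2 ^ k) (hb : b < 2 ^ k) (h : a ≠ b) :
    topDiffBit a b < k :=
  (Nat.log2_lt (mt xor_eq_zero_iff.mp h)).2 (Nat.xor_lt_two_pow ha hb)

def arcColor {n : ℕ} (a b : Fin n) (h : a ≠ b) : Fin (Nat.clog 2 n) × Bool :=
  have hpow {x : Fin n} : (x : ℕ) < 2 ^ Nat.clog 2 n := x.2.trans_le (Nat.le_pow_clog one_lt_two n)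
  (⟨topDiffBit a b, topDiffBit_lt hpow hpow (Fin.val_injective.ne h)⟩,
    (a : ℕ).testBit (topDiffBit a b))

lemma arcColor_ne {n : ℕ} {a b c : Fin n} (hab : a ≠ b) (hbc : b ≠ c) :
    arcColor a b hab ≠ arcColor b c hbc := by
  intro h
  simp only [arcColor, Prod.mk.injEq, Fin.mk.injEq] at h
  obtain ⟨hbit, hsign⟩ := h
  exact testBit_topDiffBit_ne (Fin.val_injective.ne hab) (hbit ▸ hsign)

lemma exists_mul_eq_neg_one_of_adj {n k : ℕ} {t : ℤ} (ht : t < 0) {u v : JVert n k}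
    (h : (Jpm n k t).Adj u v) : ∃ i, u.1 i * v.1 i = -1 := by
  by_contra! hne
  have hnonneg (i : Fin n) : 0 ≤ u.1 i * v.1 i := by
    have := hne i
    rcases u.2.1 i with hu | hu | hu <;> rcases v.2.1 i with hv | hv | hv <;> simp_all
  have := Finset.sum_nonneg fun i (_ : i ∈ univ) => hnonneg i
  linarith [h.2]

lemma ne_of_apply_eq_one_of_apply_eq_neg_one {α : Type*} {f : α → ℤ} {a b : α}
    (ha : f a = 1) (hb : f b = -1) : a ≠ b := by
  rintro rfl
  linarith

namespace JVert

variable {n : ℕ} (w : JVert n 2)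

lemma eq_or_eq_of_apply_ne_zero {i j k : Fin n} (hi : w.1 i ≠ 0) (hj : w.1 j ≠ 0) (hij : i ≠ j)
    (hk : w.1 k ≠ 0) : k = i ∨ k = j := by
  have hsub : ({i, j} : Finset (Fin n)) ⊆ univ.filter (fun a => w.1 a ≠ 0) := by
    simp [insert_subset_iff, hi, hj]
  have hsupp := Finset.eq_of_subset_of_card_le hsub (by rw [w.2.2, card_pair hij])
  have hk_mem : k ∈ ({i, j} : Finset (Fin n)) := by
    rw [hsupp]
    simpa using hk
  simpa using hk_mem

variable {w} {a b : Fin n}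

lemma eq_of_apply_eq_one (ha : w.1 a = 1) (hb : w.1 b = -1) {a' : Fin n} (ha' : w.1 a' = 1) :
    a' = a := by
  rcases w.eq_or_eq_of_apply_ne_zero (k := a') (by simp [ha]) (by simp [hb])
    (ne_of_apply_eq_one_of_apply_eq_neg_one ha hb) (by simp [ha']) with h | rfl
  · exact h
  · linarith

lemma eq_of_apply_eq_neg_one (ha : w.1 a = 1) (hb : w.1 b = -1) {b' : Fin n}
    (hb' : w.1 b' = -1) : b' = b := by
  rcases w.eq_or_eq_of_apply_ne_zero (k := b') (by simp [ha]) (by simp [hb])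
    (ne_of_apply_eq_one_of_apply_eq_neg_one ha hb) (by simp [hb']) with rfl | h
  · linarith
  · exact h

noncomputable def jpmColor (w : JVert n 2) : Bool ⊕ (Fin (Nat.clog 2 n) × Bool) :=
  if h : ∃ a b, w.1 a = 1 ∧ w.1 b = -1 then
    .inr (arcColor _ _ (ne_of_apply_eq_one_of_apply_eq_neg_one
      h.choose_spec.choose_spec.1 h.choose_spec.choose_spec.2))
  else .inl (decide (∃ a, w.1 a = 1))

lemma jpmColor_eq_inr (ha : w.1 a = 1) (hb : w.1 b = -1) :
    w.jpmColor = .inr (arcColor a b (ne_of_apply_eq_one_of_apply_eq_neg_one ha hb)) := by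
  have h : ∃ a b, w.1 a = 1 ∧ w.1 b = -1 := ⟨a, b, ha, hb⟩
  obtain ⟨ha', hb'⟩ := h.choose_spec.choose_spec
  rw [jpmColor, dif_pos h]
  congr 2
  · exact eq_of_apply_eq_one ha hb ha'
  · exact eq_of_apply_eq_neg_one ha hb hb'

lemma jpmColor_ne {u v : JVert n 2} {i : Fin n} (hu : u.1 i = 1) (hv : v.1 i = -1) :
    u.jpmColor ≠ v.jpmColor := by
  by_cases hv_arc : ∃ c d, v.1 c = 1 ∧ v.1 d = -1
  · obtain ⟨c, d, hc, hd⟩ := hv_arc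
    obtain rfl := eq_of_apply_eq_neg_one hc hd hv
    rw [jpmColor_eq_inr hc hv]
    by_cases hu_arc : ∃ a b, u.1 a = 1 ∧ u.1 b = -1
    · obtain ⟨a, b, ha, hb⟩ := hu_arc
      obtain rfl := eq_of_apply_eq_one ha hb hu
      rw [jpmColor_eq_inr hu hb]
      exact fun h => arcColor_ne _ _ (Sum.inr_injective h).symm
    · rw [jpmColor, dif_neg hu_arc]
      exact Sum.inl_ne_inr
  · have hv_pos : ¬ ∃ a, v.1 a = 1 := fun ⟨a, ha⟩ => hv_arc ⟨a, i, ha, hv⟩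
    have hv_col : v.jpmColor = .inl false := by
      rw [jpmColor, dif_neg hv_arc, decide_eq_false hv_pos]
    rw [hv_col]
    by_cases hu_arc : ∃ a b, u.1 a = 1 ∧ u.1 b = -1
    · rw [jpmColor, dif_pos hu_arc]
      exact Sum.inr_ne_inl
    · rw [jpmColor, dif_neg hu_arc, decide_eq_true ⟨i, hu⟩]
      simp

end JVert

noncomputable def jpmColoring (n : ℕ) :
    (Jpm n 2 (-1)).Coloring (Bool ⊕ (Fin (Nat.clog 2 n) × Bool)) :=
  Coloring.mk JVert.jpmColor fun {_ _} huv => by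
    obtain ⟨i, hi⟩ := exists_mul_eq_neg_one_of_adj (by norm_num) huv
    rcases Int.eq_one_or_neg_one_of_mul_eq_neg_one' hi with ⟨hu, hv⟩ | ⟨hu, hv⟩
    · exact JVert.jpmColor_ne hu hv
    · exact (JVert.jpmColor_ne hv hu).symm

/-- `χ(J_±(n,2,-1)) ≤ 2⌈log₂ n⌉ + 2`. -/
theorem Jpm_two_colorable (n : ℕ) :
    (Jpm n 2 (-1)).Colorable (2 * Nat.clog 2 n + 2) := by
  simpa [mul_comm, add_comm] using (jpmColoring n).colorable
end

section
/- χ(J_±(n,2,-1)) ≥ log₂ n for all n ≥ 2. -/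
open SimpleGraph Finset

/-! The classical bound for shift graphs. Given a proper colouring with `m`
colours and the vertices `e_a - e_b` (`a < b`), let `A j` be the set of colours of the
vertices `e_i - e_j` with `i < j`. For `i < j` the colour of `e_i - e_j` lies in `A j` but not
in `A i`, because `e_i - e_j` is adjacent to every `e_a - e_i`. So `j ↦ A j` is injective,
whence `n ≤ 2 ^ m`. -/

namespace SimpleGraph.Coloring

variable {ι V α : Type*} [LinearOrder ι] {G : SimpleGraph V}

def shiftColors (C : G.Coloring α) (f : ∀ i j : ι, i < j → V) (j : ι) : Set α :=
  {c | ∃ i, ∃ h : i < j, C (f i j h) = c}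

variable (C : G.Coloring α) (f : ∀ i j : ι, i < j → V)
  (hf : ∀ a b c (hab : a < b) (hbc : b < c), G.Adj (f a b hab) (f b c hbc))
include hf

theorem color_notMem_shiftColors {i j : ι} (hij : i < j) :
    C (f i j hij) ∉ C.shiftColors f i := by
  rintro ⟨a, hai, hcolor⟩
  exact C.valid (hf a i j hai hij) hcolor

theorem shiftColors_injective : Function.Injective (C.shiftColors f) := by
  have separates : ∀ i j (hij : i < j), C.shiftColors f i ≠ C.shiftColors f j :=
    fun i j hij heq => color_notMem_shiftColors C f hf hij (heq ▸ ⟨i, hij, rfl⟩)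
  intro i j heq
  by_contra hne
  rcases lt_or_gt_of_ne hne with hij | hji
  · exact separates i j hij heq
  · exact separates j i hji heq.symm

end SimpleGraph.Coloring

theorem SimpleGraph.Colorable.card_le_two_pow_of_adj_shift {ι V : Type*} [LinearOrder ι]
    [Fintype ι] {G : SimpleGraph V} {m : ℕ} (hG : G.Colorable m) (f : ∀ i j : ι, i < j → V)
    (hf : ∀ a b c (hab : a < b) (hbc : b < c), G.Adj (f a b hab) (f b c hbc)) :
    Fintype.card ι ≤ 2 ^ m := by
  obtain ⟨C⟩ := hG
  simpa [Fintype.card_set] using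
    Fintype.card_le_of_injective _ (Coloring.shiftColors_injective C f hf)

instance JVert.finite (n k : ℕ) : Finite (JVert n k) :=
  Finite.of_injective
    (fun v i => (⟨v.1 i, by rcases v.2.1 i with h | h | h <;> simp [h]⟩ : Set.Icc (-1 : ℤ) 1))
    fun _ _ h => Subtype.ext <| funext fun i => congrArg Subtype.val (congrFun h i)

def JVert.diff {n : ℕ} (a b : Fin n) (hab : a ≠ b) : JVert n 2 := by
  refine ⟨fun x => if x = a then 1 else if x = b then -1 else 0, fun i => ?_, ?_⟩
  · by_cases h1 : i = a <;> by_cases h2 : i = b <;> simp [h1, h2, hab.symm]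
  · have support : (Finset.univ.filter (fun i : Fin n =>
        (if i = a then (1 : ℤ) else if i = b then -1 else 0) ≠ 0)) = {a, b} := by
      ext x
      by_cases h1 : x = a <;> by_cases h2 : x = b <;> simp [h1, h2, hab.symm]
    rw [support, Finset.card_pair hab]

theorem JVert.diff_apply {n : ℕ} (a b : Fin n) (hab : a ≠ b) (x : Fin n) :
    (JVert.diff a b hab).1 x = if x = a then 1 else if x = b then -1 else 0 := rfl

theorem Jpm_adj_diff {n : ℕ} {a b c : Fin n} (hab : a ≠ b) (hbc : b ≠ c) (hac : a ≠ c) :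
    (Jpm n 2 (-1)).Adj (JVert.diff a b hab) (JVert.diff b c hbc) := by
  constructor
  · intro h
    simpa [JVert.diff_apply, hab, hac] using congrFun (congrArg Subtype.val h) a
  · rw [Finset.sum_eq_single_of_mem b (Finset.mem_univ b)]
    · simp [JVert.diff_apply, hab.symm]
    · intro x _ hxb
      by_cases hxa : x = a
      · subst hxa; simp [JVert.diff_apply, hab, hac]
      · simp [JVert.diff_apply, hxa, hxb]

theorem card_le_two_pow_chromaticNumber_Jpm (n : ℕ) :
    n ≤ 2 ^ (Jpm n 2 (-1)).chromaticNumber.toNat := by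
  simpa using (Jpm n 2 (-1)).colorable_chromaticNumber_of_fintype.card_le_two_pow_of_adj_shift
    (fun a b hab => JVert.diff a b hab.ne)
    fun a b c hab hbc => Jpm_adj_diff hab.ne hbc.ne (hab.trans hbc).ne

theorem Jpm_two_lower_general (n : ℕ) :
    Real.logb 2 n ≤ ((Jpm n 2 (-1)).chromaticNumber.toNat : ℝ) := by
  rcases n.eq_zero_or_pos with rfl | hpos
  · simp
  rw [Real.logb_le_iff_le_rpow one_lt_two (by exact_mod_cast hpos), Real.rpow_natCast]
  exact_mod_cast card_le_two_pow_chromaticNumber_Jpm n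

/-- `χ(J_±(n,2,-1)) ≥ log₂ n` for `n ≥ 2`. -/
theorem Jpm_two_lower (n : ℕ) (hn : 2 ≤ n) :
    Real.logb 2 n ≤ ((Jpm n 2 (-1)).chromaticNumber.toNat : ℝ) :=
  Jpm_two_lower_general n
end

section
/- If n ≤ C(2m+1, m) (binomial coefficient), then χ(J_±(n,2,-1)) ≤ 2m + 2. -/
/-!
Give every coordinate `c` a set `g c` of colors, and call a color good for a vector `w` if it lies
in `g c` whenever `w c = 1` and outside `g c` whenever `w c = -1`. Color each vertex by a good
color if it has one, and by one extra color otherwise. If `⟪u, v⟫ = -1`, some coordinate has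
`u c = 1` and `v c = -1`, so good colors of `u` lie in `g c` and good colors of `v` do not; hence
the coloring is proper as soon as every vertex with a negative coordinate has a good color. For
`a⁻b⁻` this asks for a color outside `g a ∪ g b`, for `a⁻b⁺` a color in `g b \ g a`; pairwise
distinct `m`-subsets of `[2m+1]`, of which there are `C(2m+1, m) ≥ n`, provide both.
-/

open SimpleGraph Finset

section SignColoring

variable {ι α : Type*}

def IsGoodColor (g : ι → Finset α) (w : ι → ℤ) (i : α) : Prop :=
  (∀ c, w c = 1 → i ∈ g c) ∧ ∀ c, w c = -1 → i ∉ g c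

open Classical in
noncomputable def signColor (g : ι → Finset α) (w : ι → ℤ) : Option α :=
  if h : ∃ i, IsGoodColor g w i then some h.choose else none

lemma signColor_ne {g : ι → Finset α} {u v : ι → ℤ} {c : ι} (hu : u c = 1) (hv : v c = -1)
    (hgood : ∃ i, IsGoodColor g v i) : signColor g u ≠ signColor g v := by
  unfold signColor
  rw [dif_pos hgood]
  split_ifs with hgood'
  · rw [ne_eq, Option.some.injEq]
    intro heq
    exact hgood.choose_spec.2 c hv (heq ▸ hgood'.choose_spec.1 c hu)
  · exact (Option.some_ne_none _).symm

lemma exists_isGoodColor_of_support_subset_pair [Fintype α] [DecidableEq α] {g : ι → Finset α}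
    {w : ι → ℤ} {a b : ι} (hsupp : ∀ c, w c ≠ 0 → c = a ∨ c = b) (ha : w a = -1)
    (hunion : g a ∪ g b ≠ univ) (hsub : ¬ g b ⊆ g a) : ∃ i, IsGoodColor g w i := by
  by_cases hb : w b = 1
  · obtain ⟨i, hib, hia⟩ := not_subset.mp hsub
    refine ⟨i, fun c hc => ?_, fun c hc => ?_⟩
    · rcases hsupp c (by omega) with rfl | rfl
      · omega
      · exact hib
    · rcases hsupp c (by omega) with rfl | rfl
      · exact hia
      · omega
  · obtain ⟨i, hi⟩ : ∃ i, i ∉ g a ∪ g b := by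
      simpa [eq_univ_iff_forall] using hunion
    rw [mem_union, not_or] at hi
    refine ⟨i, fun c hc => ?_, fun c hc => ?_⟩
    · rcases hsupp c (by omega) with rfl | rfl <;> omega
    · rcases hsupp c (by omega) with rfl | rfl
      · exact hi.1
      · exact hi.2

end SignColoring

lemma exists_opposite_signs_of_sum_mul_neg {ι : Type*} [Fintype ι] {u v : ι → ℤ}
    (hu : ∀ i, u i = -1 ∨ u i = 0 ∨ u i = 1) (hv : ∀ i, v i = -1 ∨ v i = 0 ∨ v i = 1)
    (h : ∑ i, u i * v i < 0) : ∃ c, u c = 1 ∧ v c = -1 ∨ u c = -1 ∧ v c = 1 := by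
  obtain ⟨c, -, hc⟩ := exists_lt_of_sum_lt (f := fun i => u i * v i) (g := 0) (by simpa using h)
  refine ⟨c, Int.mul_eq_neg_one_iff_eq_one_or_neg_one.mp ?_⟩
  rcases hu c with h₁ | h₁ | h₁ <;> rcases hv c with h₂ | h₂ | h₂ <;> simp_all

lemma JVert.exists_support_subset_pair {n : ℕ} (v : JVert n 2) {c : Fin n} (hc : v.1 c ≠ 0) :
    ∃ d, d ≠ c ∧ ∀ e, v.1 e ≠ 0 → e = c ∨ e = d := by
  obtain ⟨a, b, hab, hsupp⟩ := card_eq_two.mp v.2.2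
  have hmem : ∀ e, v.1 e ≠ 0 ↔ e = a ∨ e = b := fun e => by
    simpa using Finset.ext_iff.mp hsupp e
  rcases (hmem c).mp hc with rfl | rfl
  · exact ⟨b, hab.symm, fun e he => (hmem e).mp he⟩
  · exact ⟨a, hab, fun e he => ((hmem e).mp he).symm⟩

theorem Jpm_two_colorable_of_family {n : ℕ} {α : Type*} [Fintype α] [DecidableEq α]
    (g : Fin n → Finset α) (hunion : ∀ a b, g a ∪ g b ≠ univ)
    (hsub : ∀ a b, a ≠ b → ¬ g b ⊆ g a) :
    (Jpm n 2 (-1)).Colorable (Fintype.card α + 1) := by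
  have hgood : ∀ v : JVert n 2, ∀ c, v.1 c = -1 → ∃ i, IsGoodColor g v.1 i := by
    intro v c hc
    obtain ⟨d, hdc, hsupp⟩ := v.exists_support_subset_pair (c := c) (by omega)
    exact exists_isGoodColor_of_support_subset_pair hsupp hc (hunion c d) (hsub c d hdc.symm)
  let C : (Jpm n 2 (-1)).Coloring (Option α) := Coloring.mk (fun v => signColor g v.1) <| by
    rintro u v ⟨-, huv⟩
    obtain ⟨c, ⟨hu, hv⟩ | ⟨hu, hv⟩⟩ :=
      exists_opposite_signs_of_sum_mul_neg u.2.1 v.2.1 (by omega)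
    · exact signColor_ne hu hv (hgood v c hv)
    · exact (signColor_ne hv hu (hgood u c hu)).symm
  simpa using C.colorable

lemma Finset.union_ne_univ_of_card_add_lt {α : Type*} [Fintype α] [DecidableEq α]
    {s t : Finset α} (h : #s + #t < Fintype.card α) : s ∪ t ≠ univ := by
  intro hst
  have := card_union_le s t
  rw [hst, card_univ] at this
  omega

/-- If `n ≤ C(2m+1, m)` then `χ(J_±(n,2,-1)) ≤ 2m + 2`. -/
theorem Jpm_two_upper (n m : ℕ) (h : n ≤ (2 * m + 1).choose m) :
    (Jpm n 2 (-1)).Colorable (2 * m + 2) := by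
  obtain ⟨f⟩ : Nonempty (Fin n ↪ {s : Finset (Fin (2 * m + 1)) // #s = m}) :=
    Function.Embedding.nonempty_of_card_le (by simpa [Fintype.card_finset_len] using h)
  have hcard : ∀ a, #(f a).1 = m := fun a => (f a).2
  simpa using Jpm_two_colorable_of_family (fun a => (f a).1)
    (fun a b => union_ne_univ_of_card_add_lt (by simp only [hcard, Fintype.card_fin]; omega))
    (fun a b hab hba => hab (f.injective (Subtype.ext
      (eq_of_subset_of_card_le hba (by rw [hcard, hcard])).symm)))
end

section
/- There is a constant c > 0 such that for every independent set I in J_±(n,3,-1), the number of special vertices of I (those whose support contains a diverse coordinate) is at most c·n². -/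
open SimpleGraph Finset

/-!
Fix a diverse coordinate `i`, witnessed by `w₊, w₋ ∈ I` with `w₊ i = 1` and `w₋ i = -1`.
Every `v ∈ I` with `v i ≠ 0` has `v i * w i = -1` for one of the two witnesses `w`; since `v`
and `w` are not adjacent, their scalar product is not `-1`, so their supports share a second
coordinate `j`, one of the at most four coordinates other than `i` in the witnesses' supports.
A vertex whose support contains `{i, j}` is determined by its third support coordinate and
three signs, so at most `8 (n - 2)` of them exist. Hence each of the at most `n` diverse
coordinates accounts for at most `32 (n - 2)` special vertices.
-/

namespace JVert

variable {n k : ℕ}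

instance : DecidableEq (JVert n k) := inferInstanceAs (DecidableEq (Subtype _))

def support (v : JVert n k) : Finset (Fin n) := univ.filter (v.1 · ≠ 0)

@[simp]
lemma mem_support {v : JVert n k} {i : Fin n} : i ∈ v.support ↔ v.1 i ≠ 0 := by
  simp [support]

lemma card_support (v : JVert n k) : #v.support = k := v.2.2

lemma eq_neg_one_or_one_of_ne_zero {v : JVert n k} {i : Fin n} (h : v.1 i ≠ 0) :
    v.1 i = -1 ∨ v.1 i = 1 :=
  (v.2.1 i).imp_right (Or.resolve_left · h)

lemma support_eq_of_subset {v : JVert n k} {s : Finset (Fin n)} (hs : s ⊆ v.support)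
    (hcard : #s = k) : v.support = s :=
  (eq_of_subset_of_card_le hs (by rw [card_support, hcard])).symm

lemma ext_of_support_eq {u v : JVert n k} (hsupp : u.support = v.support)
    (h : ∀ i ∈ u.support, u.1 i = v.1 i) : u = v := by
  refine Subtype.ext (funext fun i => ?_)
  by_cases hi : i ∈ u.support
  · exact h i hi
  · have hv : i ∉ v.support := hsupp ▸ hi
    simp only [mem_support, not_not] at hi hv
    rw [hi, hv]

lemma card_filter_support_eq_le (S : Finset (JVert n k)) (s : Finset (Fin n)) :
    #(S.filter (·.support = s)) ≤ 2 ^ #s := by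
  have hmaps : ∀ v ∈ S.filter (·.support = s),
      (fun i (_ : i ∈ s) => v.1 i) ∈ s.pi fun _ => ({-1, 1} : Finset ℤ) := by
    intro v hv
    rw [mem_filter] at hv
    refine mem_pi.2 fun i hi => ?_
    have : v.1 i ≠ 0 := mem_support.1 (hv.2 ▸ hi)
    simpa using eq_neg_one_or_one_of_ne_zero this
  have hinj : Set.InjOn (fun v : JVert n k => fun i (_ : i ∈ s) => v.1 i)
      (S.filter (·.support = s)) := by
    intro u hu v hv huv
    simp only [mem_coe, mem_filter] at hu hv
    refine ext_of_support_eq (hu.2.trans hv.2.symm) fun i hi => ?_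
    exact congr_fun (congr_fun huv i) (hu.2 ▸ hi)
  calc #(S.filter (·.support = s))
      ≤ #(s.pi fun _ => ({-1, 1} : Finset ℤ)) := card_le_card_of_injOn _ hmaps hinj
    _ = 2 ^ #s := by simp

lemma card_filter_subset_support_le (S : Finset (JVert n k)) {t : Finset (Fin n)}
    (ht : #t + 1 = k) : #(S.filter (t ⊆ ·.support)) ≤ 2 ^ k * (n - #t) := by
  have hcover : S.filter (t ⊆ ·.support) ⊆
      tᶜ.biUnion fun l => S.filter (·.support = insert l t) := by
    intro v hv
    obtain ⟨hvS, htv⟩ := mem_filter.1 hv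
    obtain ⟨l, hlv, hlt⟩ := exists_mem_notMem_of_card_lt_card
      (show #t < #v.support by rw [card_support]; omega)
    refine mem_biUnion.2 ⟨l, mem_compl.2 hlt, mem_filter.2 ⟨hvS, ?_⟩⟩
    exact support_eq_of_subset (insert_subset hlv htv) (by rw [card_insert_of_notMem hlt, ht])
  calc #(S.filter (t ⊆ ·.support))
      ≤ ∑ l ∈ tᶜ, #(S.filter (·.support = insert l t)) :=
        (card_le_card hcover).trans card_biUnion_le
    _ ≤ ∑ _l ∈ tᶜ, 2 ^ k := sum_le_sum fun l hl =>
        (card_filter_support_eq_le S _).trans_eq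
          (by rw [card_insert_of_notMem (mem_compl.1 hl), ht])
    _ = 2 ^ k * (n - #t) := by rw [sum_const, card_compl, Fintype.card_fin, smul_eq_mul, mul_comm]

end JVert

open JVert

lemma exists_mem_support_of_not_adj {n k : ℕ} {u v : JVert n k}
    (hadj : ¬(Jpm n k (-1)).Adj u v) {i : Fin n} (hi : u.1 i * v.1 i = -1) :
    ∃ j ≠ i, j ∈ u.support ∧ j ∈ v.support := by
  have huv : u ≠ v := by
    rintro rfl
    nlinarith [mul_self_nonneg (u.1 i)]
  by_contra! hdisj
  refine hadj ⟨huv, ?_⟩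
  rw [sum_eq_single i (fun j _ hj => ?_) (by simp), hi]
  by_cases hu : u.1 j = 0
  · simp [hu]
  · simpa [hu] using hdisj j hj (mem_support.2 hu)

def IsDiverse {n k : ℕ} (I : Finset (JVert n k)) (i : Fin n) : Prop :=
  (∃ w ∈ I, w.1 i = 1) ∧ (∃ w ∈ I, w.1 i = -1)

instance {n k : ℕ} (I : Finset (JVert n k)) : DecidablePred (IsDiverse I) :=
  fun _ => inferInstanceAs (Decidable (_ ∧ _))

lemma card_filter_ne_zero_le_of_isDiverse {n : ℕ} {I : Finset (JVert n 3)}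
    (hI : ∀ u ∈ I, ∀ v ∈ I, ¬(Jpm n 3 (-1)).Adj u v) {i : Fin n} (hi : IsDiverse I i) :
    #(I.filter (·.1 i ≠ 0)) ≤ 32 * (n - 2) := by
  obtain ⟨⟨wp, hwp, hwpi⟩, ⟨wm, hwm, hwmi⟩⟩ := hi
  set J := wp.support.erase i ∪ wm.support.erase i
  have hJ : #J ≤ 4 := (card_union_le _ _).trans <| by
    rw [card_erase_of_mem (by simp [hwpi]), card_erase_of_mem (by simp [hwmi]),
      card_support, card_support]
  have hcover :
      I.filter (·.1 i ≠ 0) ⊆ J.biUnion fun j => I.filter ({i, j} ⊆ ·.support) := by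
    intro v hv
    obtain ⟨hvI, hvi⟩ := mem_filter.1 hv
    obtain ⟨w, hw, hwJ, hvw⟩ : ∃ w ∈ I, w.support.erase i ⊆ J ∧ v.1 i * w.1 i = -1 := by
      rcases eq_neg_one_or_one_of_ne_zero hvi with h | h
      · exact ⟨wp, hwp, subset_union_left, by rw [h, hwpi]; norm_num⟩
      · exact ⟨wm, hwm, subset_union_right, by rw [h, hwmi]; norm_num⟩
    obtain ⟨j, hji, hjv, hjw⟩ := exists_mem_support_of_not_adj (hI v hvI w hw) hvw
    refine mem_biUnion.2 ⟨j, hwJ (mem_erase.2 ⟨hji, hjw⟩), mem_filter.2 ⟨hvI, ?_⟩⟩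
    exact insert_subset (mem_support.2 hvi) (singleton_subset_iff.2 hjv)
  have hpair : ∀ j ∈ J, #(I.filter ({i, j} ⊆ ·.support)) ≤ 2 ^ 3 * (n - 2) := by
    intro j hj
    have hij : i ≠ j := by
      rcases mem_union.1 hj with h | h <;> exact (ne_of_mem_erase h).symm
    have h2 : #({i, j} : Finset (Fin n)) = 2 := card_pair hij
    exact (card_filter_subset_support_le I (by rw [h2])).trans_eq (by rw [h2])
  calc #(I.filter (·.1 i ≠ 0))
      ≤ ∑ j ∈ J, #(I.filter ({i, j} ⊆ ·.support)) :=
        (card_le_card hcover).trans card_biUnion_le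
    _ ≤ ∑ _j ∈ J, 2 ^ 3 * (n - 2) := sum_le_sum hpair
    _ ≤ 4 * (2 ^ 3 * (n - 2)) := by
        rw [sum_const, smul_eq_mul]
        exact Nat.mul_le_mul_right _ hJ
    _ = 32 * (n - 2) := by ring

lemma card_filter_exists_isDiverse_le {n : ℕ} {I : Finset (JVert n 3)}
    (hI : ∀ u ∈ I, ∀ v ∈ I, ¬(Jpm n 3 (-1)).Adj u v) :
    #(I.filter fun v => ∃ i, v.1 i ≠ 0 ∧ IsDiverse I i) ≤ n * (32 * (n - 2)) := by
  have hcover : (I.filter fun v => ∃ i, v.1 i ≠ 0 ∧ IsDiverse I i) ⊆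
      (univ.filter (IsDiverse I)).biUnion fun i => I.filter (·.1 i ≠ 0) := by
    intro v hv
    obtain ⟨hvI, i, hvi, hi⟩ := mem_filter.1 hv
    exact mem_biUnion.2 ⟨i, mem_filter.2 ⟨mem_univ i, hi⟩, mem_filter.2 ⟨hvI, hvi⟩⟩
  calc #(I.filter fun v => ∃ i, v.1 i ≠ 0 ∧ IsDiverse I i)
      ≤ ∑ i ∈ univ.filter (IsDiverse I), #(I.filter (·.1 i ≠ 0)) :=
        (card_le_card hcover).trans card_biUnion_le
    _ ≤ ∑ _i ∈ univ.filter (IsDiverse I), 32 * (n - 2) :=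
        sum_le_sum fun i hi => card_filter_ne_zero_le_of_isDiverse hI (mem_filter.1 hi).2
    _ ≤ n * (32 * (n - 2)) := by
        rw [sum_const, smul_eq_mul]
        exact Nat.mul_le_mul_right _ ((card_filter_le _ _).trans_eq (card_fin n))

/-- There is a constant `c > 0` such that any independent set in `J_±(n,3,-1)`
has at most `c n²` special vertices (vertices whose support contains a diverse
coordinate). -/
theorem special_vertices_bound :
    ∃ c : ℝ, 0 < c ∧ ∀ (n : ℕ) (I : Finset (JVert n 3)),
      (∀ u ∈ I, ∀ v ∈ I, ¬ (Jpm n 3 (-1)).Adj u v) →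
      (Nat.card {v : JVert n 3 // v ∈ I ∧ ∃ i, v.1 i ≠ 0 ∧
        (∃ w ∈ I, w.1 i = 1) ∧ (∃ w ∈ I, w.1 i = -1)} : ℝ) ≤ c * n ^ 2 := by
  refine ⟨32, by norm_num, fun n I hI => ?_⟩
  show (Nat.card {v : JVert n 3 // v ∈ I ∧ ∃ i, v.1 i ≠ 0 ∧ IsDiverse I i} : ℝ) ≤
    32 * n ^ 2
  have hcard : Nat.card {v : JVert n 3 // v ∈ I ∧ ∃ i, v.1 i ≠ 0 ∧ IsDiverse I i} =
      #(I.filter fun v => ∃ i, v.1 i ≠ 0 ∧ IsDiverse I i) := by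
    rw [← Nat.card_eq_finsetCard]
    exact Nat.card_congr (Equiv.subtypeEquivRight fun v => by rw [mem_filter])
  have hquadratic : n * (32 * (n - 2)) ≤ 32 * n ^ 2 := by
    rw [mul_left_comm, sq]
    gcongr
    omega
  rw [hcard]
  exact_mod_cast (card_filter_exists_isDiverse_le hI).trans hquadratic
end

section
/- There exist positive constants c and C such that for all n > 3, c·log₂ n ≤ χ(J_±(n,3,-1)) ≤ C·log₂ n. -/
/-!
Lower bound: for `i < j` in `Fin (n / 2)` put `w i j = e_i - e_j + e_(n/2 + j)`. Then
`⟪w i j, w j k⟫ = -1`, so `J_±(n,3,-1)` contains a homomorphic image of the shift graph on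
`n / 2` points. In a proper colouring of the shift graph the sets of colours of the pairs
`(i, j)`, `j > i`, are pairwise distinct, so at least `log₂ (n / 2)` colours are needed.

Upper bound: take a family of `k = O(log n)` subsets `A ℓ` of the coordinates that cuts every
`3`-set in all `8` possible ways (it exists by a union bound over random families). Colour a
vertex `v` by an `ℓ` with `A ℓ ∩ supp v = {i | v i = 1}`. Two vertices of the same colour never
have opposite signs on a common coordinate, so their scalar product is `≥ 0`.
-/

open SimpleGraph Finset

def shiftGraph (ι : Type*) [LinearOrder ι] : SimpleGraph {p : ι × ι // p.1 < p.2} :=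
  SimpleGraph.fromRel fun p q => p.1.2 = q.1.1

theorem card_le_two_pow_of_shiftGraph_colorable {ι : Type*} [LinearOrder ι] [Fintype ι]
    {t : ℕ} (h : (shiftGraph ι).Colorable t) : Fintype.card ι ≤ 2 ^ t := by
  classical
  obtain ⟨C⟩ := h
  let colorsAbove (i : ι) : Finset (Fin t) :=
    univ.filter fun c => ∃ j, ∃ hij : i < j, C ⟨(i, j), hij⟩ = c
  have hne {i j : ι} (hij : i < j) : colorsAbove i ≠ colorsAbove j := by
    intro heq
    have hmem : C ⟨(i, j), hij⟩ ∈ colorsAbove i := mem_filter.mpr ⟨mem_univ _, j, hij, rfl⟩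
    obtain ⟨k, hjk, hk⟩ := (mem_filter.mp (heq ▸ hmem)).2
    exact C.valid (by simp [shiftGraph, hij.ne']) hk
  have hinj : Function.Injective colorsAbove := by
    intro i j h
    by_contra hij
    rcases lt_or_gt_of_ne hij with hlt | hlt
    · exact hne hlt h
    · exact hne hlt h.symm
  simpa using Fintype.card_le_of_injective _ hinj

section
variable {n : ℕ}

def tripleVec (a b c : Fin n) : Fin n → ℤ := Pi.single a 1 - Pi.single b 1 + Pi.single c 1

variable {a b c : Fin n}

def JVert.triple (hab : a ≠ b) (hac : a ≠ c) (hbc : b ≠ c) : JVert n 3 := by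
  refine ⟨tripleVec a b c, fun i => ?_, ?_⟩
  · by_cases hia : i = a <;> by_cases hib : i = b <;> by_cases hic : i = c <;>
      simp_all [tripleVec]
  have hsupp : ({i | tripleVec a b c i ≠ 0} : Finset (Fin n)) = {a, b, c} := by
    ext i
    by_cases hia : i = a <;> by_cases hib : i = b <;> by_cases hic : i = c <;>
      simp_all [tripleVec, Pi.single_apply]
  rw [hsupp, card_eq_three]
  exact ⟨a, b, c, hab, hac, hbc, rfl⟩

lemma tripleVec_dotProduct {d e : Fin n} (hab : a ≠ b) (hbc : b ≠ c) (hbd : b ≠ d) (hbe : b ≠ e)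
    (had : a ≠ d) (hae : a ≠ e) (hcd : c ≠ d) (hce : c ≠ e) :
    tripleVec a b c ⬝ᵥ tripleVec b d e = -1 := by
  simp [tripleVec, dotProduct_add, dotProduct_sub, hab, hbc.symm, hbd.symm, hbe.symm, had.symm,
    hae.symm, hcd.symm, hce.symm]

end

section
variable {n : ℕ} {ι : Type*} [LinearOrder ι]

def shiftVertex (φ : ι ⊕ ι ↪ Fin n) (p : {p : ι × ι // p.1 < p.2}) : JVert n 3 :=
  JVert.triple (a := φ (.inl p.1.1)) (b := φ (.inl p.1.2)) (c := φ (.inr p.1.2))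
    (by simp [p.2.ne]) (by simp) (by simp)

def shiftGraphHom (φ : ι ⊕ ι ↪ Fin n) : shiftGraph ι →g Jpm n 3 (-1) where
  toFun := shiftVertex φ
  map_rel' := by
    have key : ∀ p q : {p : ι × ι // p.1 < p.2}, p.1.2 = q.1.1 →
        (Jpm n 3 (-1)).Adj (shiftVertex φ p) (shiftVertex φ q) := by
      rintro ⟨⟨i, j⟩, hij⟩ ⟨⟨j', k⟩, hjk⟩ (rfl : j = j')
      have hik : i ≠ k := (hij.trans hjk).ne
      refine ⟨fun h => ?_, tripleVec_dotProduct (by simp [hij.ne]) (by simp) (by simp [hjk.ne])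
        (by simp) (by simp [hik]) (by simp) (by simp) (by simp [hjk.ne])⟩
      have := congrFun (congrArg Subtype.val h) (φ (.inl j))
      simp [shiftVertex, JVert.triple, tripleVec, hij.ne', hjk.ne] at this
    rintro p q ⟨-, hpq | hqp⟩
    · exact key p q hpq
    · exact (key q p hqp).symm
end

theorem Jpm_half_le_two_pow_of_colorable {n t : ℕ} (h : (Jpm n 3 (-1)).Colorable t) :
    n / 2 ≤ 2 ^ t := by
  let φ : Fin (n / 2) ⊕ Fin (n / 2) ↪ Fin n :=
    finSumFinEquiv.toEmbedding.trans (Fin.castLEEmb (by omega))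
  simpa using card_le_two_pow_of_shiftGraph_colorable (h.of_hom (shiftGraphHom φ))

def IsUniversalFamily {κ α : Type*} [DecidableEq α] (r : ℕ) (A : κ → Finset α) : Prop :=
  ∀ s : Finset α, #s = r → ∀ t ⊆ s, ∃ ℓ, A ℓ ∩ s = t

theorem Jpm_colorable_of_isUniversalFamily {n r k : ℕ} {t : ℤ} (ht : t < 0)
    {A : Fin k → Finset (Fin n)} (hA : IsUniversalFamily r A) : (Jpm n r t).Colorable k := by
  have hcolor (v : JVert n r) :
      ∃ ℓ, A ℓ ∩ ({i | v.1 i ≠ 0} : Finset (Fin n)) = ({i | v.1 i = 1} : Finset (Fin n)) :=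
    hA _ v.2.2 _ fun i => by simp +contextual
  choose col hcol using hcolor
  have hmem (v : JVert n r) (i : Fin n) (hi : v.1 i ≠ 0) : i ∈ A (col v) ↔ v.1 i = 1 := by
    simpa [hi] using Finset.ext_iff.mp (hcol v) i
  refine ⟨Coloring.mk col fun {u v} huv hc => ?_⟩
  have hnonneg (i : Fin n) : 0 ≤ u.1 i * v.1 i := by
    have hu := u.2.1 i
    have hv := v.2.1 i
    have hsign (hui : u.1 i ≠ 0) (hvi : v.1 i ≠ 0) : u.1 i = 1 ↔ v.1 i = 1 := by
      rw [← hmem u i hui, ← hmem v i hvi, hc]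
    rcases hu with hu | hu | hu <;> rcases hv with hv | hv | hv <;> simp_all
  have hsum : ∑ i, u.1 i * v.1 i = t := huv.2
  linarith [Finset.sum_nonneg fun i (_ : i ∈ univ) => hnonneg i]

section
variable {α : Type*} [Fintype α] [DecidableEq α]

lemma card_filter_inter_eq {s t : Finset α} (hts : t ⊆ s) :
    #{B : Finset α | B ∩ s = t} = 2 ^ (Fintype.card α - #s) := by
  have hIcc : ({B : Finset α | B ∩ s = t} : Finset _) = Icc t (t ∪ sᶜ) := by
    ext B
    simp only [mem_filter, mem_univ, true_and, mem_Icc]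
    constructor
    · rintro rfl
      exact ⟨inter_subset_left, fun x hx => by by_cases hxs : x ∈ s <;> simp_all⟩
    · rintro ⟨htB, hBts⟩
      ext x
      have := @hBts x
      have := @hts x
      have := @htB x
      by_cases hxs : x ∈ s <;> by_cases hxt : x ∈ t <;> simp_all
  rw [hIcc, card_Icc_finset subset_union_left,
    card_union_of_disjoint (disjoint_compl_right.mono_left hts), card_compl,
    Nat.add_sub_cancel_left]

lemma card_filter_forall_inter_ne (k : ℕ) {s t : Finset α} (hts : t ⊆ s) :
    #{A : Fin k → Finset α | ∀ ℓ, A ℓ ∩ s ≠ t} =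
      (2 ^ Fintype.card α - 2 ^ (Fintype.card α - #s)) ^ k := by
  have hpi : ({A : Fin k → Finset α | ∀ ℓ, A ℓ ∩ s ≠ t} : Finset _) =
      Fintype.piFinset fun _ => {B | B ∩ s ≠ t} := by
    ext A; simp
  rw [hpi, Fintype.card_piFinset_const, filter_not, card_sdiff_of_subset (filter_subset _ _),
    card_filter_inter_eq hts, card_univ, Fintype.card_finset]

end

lemma choose_mul_lt_of_lt {N r k : ℕ} (h : N.choose r * 2 ^ r * (2 ^ r - 1) ^ k < 2 ^ (r * k)) :
    N.choose r * 2 ^ r * (2 ^ N - 2 ^ (N - r)) ^ k < (2 ^ N) ^ k := by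
  rcases le_or_gt r N with hrN | hNr
  · have hsplit : 2 ^ N - 2 ^ (N - r) = (2 ^ r - 1) * 2 ^ (N - r) := by
      rw [Nat.sub_one_mul, ← pow_add, Nat.add_sub_cancel' hrN]
    have hpow : (2 ^ N) ^ k = 2 ^ (r * k) * (2 ^ (N - r)) ^ k := by
      rw [← pow_mul, ← pow_mul, ← pow_add, ← add_mul, Nat.add_sub_cancel' hrN]
    rw [hsplit, hpow, mul_pow, ← mul_assoc]
    exact Nat.mul_lt_mul_of_pos_right h (by positivity)
  · simp [Nat.choose_eq_zero_of_lt hNr]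

theorem exists_isUniversalFamily {α : Type*} [Fintype α] [DecidableEq α] {r k : ℕ}
    (h : (Fintype.card α).choose r * 2 ^ r * (2 ^ r - 1) ^ k < 2 ^ (r * k)) :
    ∃ A : Fin k → Finset α, IsUniversalFamily r A := by
  by_contra! hnone
  have hcover : (univ : Finset (Fin k → Finset α)) ⊆
      (powersetCard r univ).biUnion fun s => s.powerset.biUnion fun t =>
        {A | ∀ ℓ, A ℓ ∩ s ≠ t} := by
    intro A _
    obtain ⟨s, hs, t, hts, hfail⟩ : ∃ s : Finset α, #s = r ∧ ∃ t ⊆ s, ∀ ℓ, A ℓ ∩ s ≠ t := by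
      simpa [IsUniversalFamily] using hnone A
    simp only [mem_biUnion, mem_powersetCard, mem_powerset, mem_filter]
    exact ⟨s, ⟨subset_univ s, hs⟩, t, hts, mem_univ A, hfail⟩
  set N := Fintype.card α
  have hbad (s : Finset α) (hs : s ∈ powersetCard r univ) :
      #(s.powerset.biUnion fun t => {A : Fin k → Finset α | ∀ ℓ, A ℓ ∩ s ≠ t}) ≤
        2 ^ r * (2 ^ N - 2 ^ (N - r)) ^ k := by
    rw [← (mem_powersetCard.mp hs).2, ← card_powerset, ← smul_eq_mul, ← sum_const]
    exact card_biUnion_le.trans (sum_le_sum fun t ht =>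
      (card_filter_forall_inter_ne k (mem_powerset.mp ht)).le)
  have hcount : (2 ^ N) ^ k ≤ N.choose r * 2 ^ r * (2 ^ N - 2 ^ (N - r)) ^ k := by
    calc (2 ^ N) ^ k = #(univ : Finset (Fin k → Finset α)) := by simp [N]
      _ ≤ _ := (card_le_card hcover).trans card_biUnion_le
      _ ≤ ∑ _s ∈ powersetCard r univ, 2 ^ r * (2 ^ N - 2 ^ (N - r)) ^ k := sum_le_sum hbad
      _ = N.choose r * 2 ^ r * (2 ^ N - 2 ^ (N - r)) ^ k := by
        rw [sum_const, card_powersetCard, card_univ, smul_eq_mul, mul_assoc]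
  exact (choose_mul_lt_of_lt h).not_ge hcount

lemma choose_three_mul_lt {n : ℕ} (hn : 4 ≤ n) :
    n.choose 3 * 2 ^ 3 * (2 ^ 3 - 1) ^ (40 * Nat.clog 2 n) < 2 ^ (3 * (40 * Nat.clog 2 n)) := by
  set L := Nat.clog 2 n
  have hL : 2 ≤ L := by
    simpa [Nat.clog_pow 2 2 one_lt_two] using Nat.clog_mono_right 2 (show 2 ^ 2 ≤ n from hn)
  have hchoose : n.choose 3 ≤ 2 ^ (3 * L) := by
    rw [pow_mul']
    exact (Nat.choose_le_pow n 3).trans (Nat.pow_le_pow_left (Nat.le_pow_clog one_lt_two n) 3)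
  have hseven : (7 : ℕ) ^ (40 * L) < 2 ^ (115 * L) := by
    rw [pow_mul, pow_mul]
    exact Nat.pow_lt_pow_left (by norm_num) (by omega)
  calc n.choose 3 * 2 ^ 3 * (2 ^ 3 - 1) ^ (40 * L) ≤ 2 ^ (3 * L) * 2 ^ 3 * 7 ^ (40 * L) := by
        gcongr; norm_num
    _ < 2 ^ (3 * L) * 2 ^ 3 * 2 ^ (115 * L) := by gcongr
    _ = 2 ^ (118 * L + 3) := by rw [← pow_add, ← pow_add]; ring_nf
    _ ≤ 2 ^ (3 * (40 * L)) := Nat.pow_le_pow_right two_pos (by omega)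

theorem Jpm_colorable_forty_mul_clog {n : ℕ} (hn : 4 ≤ n) :
    (Jpm n 3 (-1)).Colorable (40 * Nat.clog 2 n) :=
  have ⟨_A, hA⟩ := exists_isUniversalFamily (α := Fin n) (by simpa using choose_three_mul_lt hn)
  Jpm_colorable_of_isUniversalFamily (by norm_num) hA

lemma clog_two_le_two_mul_logb {n : ℕ} (hn : 2 ≤ n) : (Nat.clog 2 n : ℝ) ≤ 2 * Real.logb 2 n := by
  have hlogb : 1 ≤ Real.logb 2 n := by
    rw [Real.le_logb_iff_rpow_le one_lt_two (by positivity), Real.rpow_one]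
    exact_mod_cast hn
  have hceil : (Nat.clog 2 n : ℝ) < Real.logb 2 n + 1 := by
    rw [← Real.natCeil_logb_natCast]
    simpa using Nat.ceil_lt_add_one (zero_le_one.trans hlogb)
  linarith

lemma logb_le_add_two_of_half_le_two_pow {n t : ℕ} (h : n / 2 ≤ 2 ^ t) :
    Real.logb 2 n ≤ t + 2 := by
  rcases n.eq_zero_or_pos with rfl | hn
  · rw [Nat.cast_zero, Real.logb_zero]; positivity
  have hle : n ≤ 2 ^ (t + 2) := by
    have := Nat.one_le_two_pow (n := t)
    rw [pow_add]; omega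
  rw [Real.logb_le_iff_le_rpow one_lt_two (by positivity)]
  exact_mod_cast hle

/-- `χ(J_±(n,3,-1)) = Θ(log n)`. -/
theorem Jpm_three_neg_one_chromatic :
    ∃ c C : ℝ, 0 < c ∧ 0 < C ∧ ∀ n : ℕ, 3 < n →
      c * Real.logb 2 n ≤ ((Jpm n 3 (-1)).chromaticNumber.toNat : ℝ) ∧
      ((Jpm n 3 (-1)).chromaticNumber.toNat : ℝ) ≤ C * Real.logb 2 n := by
  refine ⟨1 / 3, 80, by norm_num, by norm_num, fun n hn => ?_⟩
  have hcol := Jpm_colorable_forty_mul_clog hn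
  set χ := (Jpm n 3 (-1)).chromaticNumber.toNat
  have hlow : n / 2 ≤ 2 ^ χ := Jpm_half_le_two_pow_of_colorable (colorable_chromaticNumber hcol)
  have hχ_pos : 1 ≤ χ := Nat.one_le_iff_ne_zero.mpr fun h => by simp [h] at hlow; omega
  have hχ_le : χ ≤ 40 * Nat.clog 2 n := ENat.toNat_le_of_le_natCast hcol.chromaticNumber_le
  have hlogb := logb_le_add_two_of_half_le_two_pow hlow
  have hclog := clog_two_le_two_mul_logb (n := n) (by omega)
  have hχ_pos' : (1 : ℝ) ≤ χ := by exact_mod_cast hχ_pos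
  have hχ_le' : (χ : ℝ) ≤ 40 * Nat.clog 2 n := by exact_mod_cast hχ_le
  constructor <;> linarith
end

section
/- Let I be an independent set in J_±(n,3,-2), and consider the vertices of I whose signs alternate with respect to the coordinate order (i.e., of the form a⁺b⁻c⁺ or a⁻b⁺c⁻ with a < b < c). Then the set of pairs {{a,b}, {b,c}} of consecutive coordinate pairs arising from the supports of these vertices forms a bipartite subgraph of the shift graph H on pairs of [n]. -/
/-!
Two alternating vertices that share a consecutive pair of coordinates and carry opposite signs
on it have scalar product `-2`, unless one is the negative of the other. So in an independent
set the sign an alternating vertex puts on the first coordinate of a consecutive pair does not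
depend on the vertex, except for antipodal pairs `±v`, of which we keep the `+-+` member.
Colouring each pair by that sign separates the two pairs of every alternating vertex.
-/

open SimpleGraph Finset

namespace JVert

variable {n k : ℕ}

instance : Neg (JVert n k) where
  neg v := ⟨-v.1, fun i => by rcases v.2.1 i with h | h | h <;> simp [h], by simpa using v.2.2⟩

@[simp]
lemma neg_apply (v : JVert n k) (i : Fin n) : (-v).1 i = -v.1 i := rfl

@[simp]
lemma neg_neg (v : JVert n k) : - -v = v :=
  Subtype.ext (by funext i; simp)

lemma sq_eq_one_of_ne_zero (v : JVert n k) {i : Fin n} (hi : v.1 i ≠ 0) : v.1 i ^ 2 = 1 := by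
  rcases v.2.1 i with h | h | h <;> simp_all

section Support

variable {v w : JVert n 3} {a b c : Fin n}

lemma eq_or_eq_or_eq_of_ne_zero (hab : a ≠ b) (hac : a ≠ c) (hbc : b ≠ c)
    (ha : v.1 a ≠ 0) (hb : v.1 b ≠ 0) (hc : v.1 c ≠ 0) {i : Fin n} (hi : v.1 i ≠ 0) :
    i = a ∨ i = b ∨ i = c := by
  have hsupp : univ.filter (fun j => v.1 j ≠ 0) = {a, b, c} := by
    refine (eq_of_subset_of_card_le ?_ (by rw [v.2.2, card_eq_three.2 ⟨a, b, c, hab, hac, hbc, rfl⟩])).symm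
    intro j hj
    simp only [mem_insert, mem_singleton] at hj
    rcases hj with rfl | rfl | rfl <;> simpa
  simpa [hsupp] using (mem_filter.2 ⟨mem_univ i, hi⟩ : i ∈ univ.filter (fun j => v.1 j ≠ 0))

lemma sum_mul_eq_of_ne_zero (hab : a ≠ b) (hac : a ≠ c) (hbc : b ≠ c)
    (ha : v.1 a ≠ 0) (hb : v.1 b ≠ 0) (hc : v.1 c ≠ 0) :
    ∑ i, v.1 i * w.1 i = v.1 a * w.1 a + v.1 b * w.1 b + v.1 c * w.1 c := by
  rw [← sum_subset (subset_univ {a, b, c}) fun i _ hi => ?_,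
    sum_insert (by simp [hab, hac]), sum_insert (by simp [hbc]), sum_singleton, add_assoc]
  simp only [mem_insert, mem_singleton] at hi
  by_contra h
  exact hi (eq_or_eq_or_eq_of_ne_zero hab hac hbc ha hb hc (left_ne_zero_of_mul h))

lemma adj_of_eq_neg_of_eq_zero (hab : a ≠ b) (hac : a ≠ c) (hbc : b ≠ c)
    (ha : v.1 a ≠ 0) (hb : v.1 b ≠ 0) (hc : v.1 c ≠ 0)
    (hwa : w.1 a = -v.1 a) (hwb : w.1 b = -v.1 b) (hwc : w.1 c = 0) :
    (Jpm n 3 (-2)).Adj v w := by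
  refine ⟨fun h => ha (by subst h; omega), ?_⟩
  rw [sum_mul_eq_of_ne_zero hab hac hbc ha hb hc, hwa, hwb, hwc]
  linear_combination (-1 : ℤ) * v.sq_eq_one_of_ne_zero ha - v.sq_eq_one_of_ne_zero hb

end Support

structure IsAlternating (v : JVert n 3) (a b c : Fin n) : Prop where
  lt_ab : a < b
  lt_bc : b < c
  sign : v.1 a = 1 ∨ v.1 a = -1
  apply_b : v.1 b = -v.1 a
  apply_c : v.1 c = v.1 a

namespace IsAlternating

variable {v w : JVert n 3} {a b c a' b' c' x y : Fin n}

lemma neg (hv : v.IsAlternating a b c) : (-v).IsAlternating a b c where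
  lt_ab := hv.lt_ab
  lt_bc := hv.lt_bc
  sign := by simp only [neg_apply, neg_eq_iff_eq_neg]; exact hv.sign.symm
  apply_b := by simp [hv.apply_b]
  apply_c := by simp [hv.apply_c]

lemma apply_a_ne_zero (hv : v.IsAlternating a b c) : v.1 a ≠ 0 := by
  rcases hv.sign with h | h <;> simp [h]

lemma apply_b_ne_zero (hv : v.IsAlternating a b c) : v.1 b ≠ 0 := by
  simpa [hv.apply_b] using hv.apply_a_ne_zero

lemma apply_c_ne_zero (hv : v.IsAlternating a b c) : v.1 c ≠ 0 := by
  simpa [hv.apply_c] using hv.apply_a_ne_zero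

lemma apply_eq_zero (hv : v.IsAlternating a b c) {i : Fin n}
    (ha : i ≠ a) (hb : i ≠ b) (hc : i ≠ c) : v.1 i = 0 := by
  by_contra hi
  have := hv.lt_ab
  have := hv.lt_bc
  have := eq_or_eq_or_eq_of_ne_zero (by omega) (by omega) (by omega)
    hv.apply_a_ne_zero hv.apply_b_ne_zero hv.apply_c_ne_zero hi
  omega

lemma apply_snd (hv : v.IsAlternating a b c) (hxy : x = a ∧ y = b ∨ x = b ∧ y = c) :
    v.1 y = -v.1 x := by
  rcases hxy with ⟨rfl, rfl⟩ | ⟨rfl, rfl⟩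
  · exact hv.apply_b
  · rw [hv.apply_b, hv.apply_c, _root_.neg_neg]

lemma eq_neg (hv : v.IsAlternating a b c) (hw : w.IsAlternating a b c)
    (hwa : w.1 a = -v.1 a) : w = -v := by
  refine Subtype.ext (funext fun i => ?_)
  by_cases ha : i = a
  · subst ha; simpa using hwa
  by_cases hb : i = b
  · subst hb; simp [hw.apply_b, hv.apply_b, hwa]
  by_cases hc : i = c
  · subst hc; simp [hw.apply_c, hv.apply_c, hwa]
  simp [hw.apply_eq_zero ha hb hc, hv.apply_eq_zero ha hb hc]

/-- If the triples differ, the third coordinate of `v` lies outside the support of `w`. -/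
theorem adj_or_eq_neg (hv : v.IsAlternating a b c) (hw : w.IsAlternating a' b' c')
    (hxy : x = a ∧ y = b ∨ x = b ∧ y = c) (hxy' : x = a' ∧ y = b' ∨ x = b' ∧ y = c')
    (hwx : w.1 x = -v.1 x) :
    (Jpm n 3 (-2)).Adj v w ∨ (w = -v ∧ a' = a) := by
  have hwy : w.1 y = -v.1 y := by rw [hw.apply_snd hxy', hv.apply_snd hxy, hwx]
  have := hv.lt_ab
  have := hv.lt_bc
  have := hw.lt_ab
  have := hw.lt_bc
  by_cases hsame : a' = a ∧ b' = b ∧ c' = c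
  · obtain ⟨rfl, rfl, rfl⟩ := hsame
    refine Or.inr ⟨hv.eq_neg hw ?_, rfl⟩
    rcases hxy with ⟨rfl, -⟩ | ⟨rfl, -⟩
    · exact hwx
    · rw [hv.apply_b, hw.apply_b] at hwx
      omega
  · left
    rcases hxy with ⟨rfl, rfl⟩ | ⟨rfl, rfl⟩
    · exact adj_of_eq_neg_of_eq_zero (by omega) (by omega) (by omega) hv.apply_a_ne_zero
        hv.apply_b_ne_zero hv.apply_c_ne_zero hwx hwy (hw.apply_eq_zero (by omega) (by omega)
        (by omega))
    · exact adj_of_eq_neg_of_eq_zero (by omega) (by omega) (by omega) hv.apply_b_ne_zero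
        hv.apply_c_ne_zero hv.apply_a_ne_zero hwx hwy (hw.apply_eq_zero (by omega) (by omega)
        (by omega))

end IsAlternating

end JVert

open JVert

section Colouring

variable {n : ℕ} {I : Set (JVert n 3)} {v : JVert n 3} {a b c x y : Fin n}

/-- The colour of a pair; of an antipodal pair `±w ⊆ I` only the `+-+` member contributes. -/
def PositiveEnd (I : Set (JVert n 3)) (x y : Fin n) : Prop :=
  ∃ w ∈ I, ∃ a b c, w.IsAlternating a b c ∧ (w.1 a = 1 ∨ -w ∉ I) ∧
    (x = a ∧ y = b ∨ x = b ∧ y = c) ∧ w.1 x = 1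

lemma exists_isAlternating_representative (hv : v ∈ I) (halt : v.IsAlternating a b c) :
    ∃ u ∈ I, u.IsAlternating a b c ∧ (u.1 a = 1 ∨ -u ∉ I) := by
  by_cases hrep : v.1 a = 1 ∨ -v ∉ I
  · exact ⟨v, hv, halt, hrep⟩
  · push Not at hrep
    have hva : v.1 a = -1 := halt.sign.resolve_left hrep.1
    exact ⟨-v, hrep.2, halt.neg, Or.inl (by simp [hva])⟩

lemma not_positiveEnd (hI : ∀ u ∈ I, ∀ w ∈ I, ¬ (Jpm n 3 (-2)).Adj u w) (hv : v ∈ I)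
    (halt : v.IsAlternating a b c) (hrep : v.1 a = 1 ∨ -v ∉ I)
    (hxy : x = a ∧ y = b ∨ x = b ∧ y = c) (hvx : v.1 x = -1) :
    ¬ PositiveEnd I x y := by
  rintro ⟨w, hw, a', b', c', hwalt, hwrep, hxy', hwx⟩
  rcases halt.adj_or_eq_neg hwalt hxy hxy' (by omega) with hadj | ⟨rfl, rfl⟩
  · exact hI v hv w hw hadj
  · simp only [neg_apply, neg_eq_iff_eq_neg, JVert.neg_neg] at hwrep
    rcases hwrep with hva | hv'
    · exact hrep.elim (fun h => by omega) (· hw)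
    · exact hv' hv

theorem positiveEnd_iff_not (hI : ∀ u ∈ I, ∀ w ∈ I, ¬ (Jpm n 3 (-2)).Adj u w) (hv : v ∈ I)
    (halt : v.IsAlternating a b c) : PositiveEnd I a b ↔ ¬ PositiveEnd I b c := by
  obtain ⟨u, hu, hualt, hurep⟩ := exists_isAlternating_representative hv halt
  rcases hualt.sign with hua | hua
  · have hub : u.1 b = -1 := by rw [hualt.apply_b, hua]
    exact iff_of_true ⟨u, hu, a, b, c, hualt, hurep, Or.inl ⟨rfl, rfl⟩, hua⟩
      (not_positiveEnd hI hu hualt hurep (Or.inr ⟨rfl, rfl⟩) hub)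
  · have hub : u.1 b = 1 := by rw [hualt.apply_b, hua]; rfl
    exact iff_of_false (not_positiveEnd hI hu hualt hurep (Or.inl ⟨rfl, rfl⟩) hua)
      (not_not.2 ⟨u, hu, a, b, c, hualt, hurep, Or.inr ⟨rfl, rfl⟩, hub⟩)

end Colouring

/-- The edges of the shift graph arising from alternating-sign vertices of an
independent set in `J_±(n,3,-2)` form a bipartite subgraph: there is a
two-coloring of the pairs separating every such edge. -/
theorem alternating_edges_bipartite (n : ℕ) (I : Set (JVert n 3))
    (hI : ∀ u ∈ I, ∀ v ∈ I, ¬ (Jpm n 3 (-2)).Adj u v) :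
    ∃ f : {p : Fin n × Fin n // p.1 < p.2} → Bool,
      ∀ v ∈ I, ∀ (a b c : Fin n) (hab : a < b) (hbc : b < c),
        ((v.1 a = 1 ∧ v.1 b = -1 ∧ v.1 c = 1) ∨
         (v.1 a = -1 ∧ v.1 b = 1 ∧ v.1 c = -1)) →
        f ⟨(a, b), hab⟩ ≠ f ⟨(b, c), hbc⟩ := by
  classical
  refine ⟨fun p => decide (PositiveEnd I p.1.1 p.1.2), fun v hv a b c hab hbc hpat => ?_⟩
  have halt : v.IsAlternating a b c := by
    rcases hpat with ⟨ha, hb, hc⟩ | ⟨ha, hb, hc⟩ <;>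
      exact ⟨hab, hbc, by simp [ha], by simp [ha, hb], by simp [ha, hc]⟩
  rw [Ne, decide_eq_decide]
  exact fun h => iff_not_self (h.symm.trans (positiveEnd_iff_not hI hv halt))
end

section
/- For all n ≥ 3, χ(J_±(n,3,-2)) ≥ ⌈log₂⌈log₂ n⌉⌉. -/
open SimpleGraph Finset

/-!
Increasing triples `i < j < k` of `Fin n` map to vertices via `(i, j, k) ↦ e_i - e_j + e_k`, and
the images of `(i, j, k)` and `(j, k, l)` have scalar product `-2`; so it suffices to colour the
shift graph on triples. Given a colouring `c` of it with `m` colours, let `S(j, k)` be the set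
of colours of the triples `(·, j, k)` and `T(k) = {S(j, k) | j < k}`. The colour of `(j, k, l)`
lies in `S(k, l)` but not in `S(j, k)`, since every `(i, j, k)` is adjacent to `(j, k, l)`.
Hence for `k < l` the set `S(k, l)` belongs to `T(l)` but not to `T(k)`, so `k ↦ T(k)` is
injective and `n ≤ 2 ^ 2 ^ m`.
-/

structure IncTriple (α : Type*) [LT α] where
  i : α
  j : α
  k : α
  hij : i < j
  hjk : j < k

def tripleShiftGraph (α : Type*) [LT α] : SimpleGraph (IncTriple α) :=
  SimpleGraph.fromRel fun s t => s.j = t.i ∧ s.k = t.j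

namespace tripleShiftGraph

variable {α β : Type*} [LinearOrder α] (C : (tripleShiftGraph α).Coloring β)

def colorsEndingAt (j k : α) : Set β :=
  C '' {t | t.j = j ∧ t.k = k}

def colorSetsEndingAt (k : α) : Set (Set β) :=
  (colorsEndingAt C · k) '' Set.Iio k

theorem color_notMem_colorsEndingAt {j k l : α} (hjk : j < k) (hkl : k < l) :
    C ⟨j, k, l, hjk, hkl⟩ ∉ colorsEndingAt C j k := by
  rintro ⟨t, ⟨rfl, rfl⟩, hc⟩
  have hne : t ≠ ⟨t.j, t.k, l, t.hjk, hkl⟩ := fun h =>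
    (congrArg IncTriple.i h ▸ t.hij).false
  exact C.valid ((fromRel_adj _ _ _).2 ⟨hne, Or.inl ⟨rfl, rfl⟩⟩) hc

theorem colorsEndingAt_ne {j k l : α} (hjk : j < k) (hkl : k < l) :
    colorsEndingAt C j k ≠ colorsEndingAt C k l := fun h =>
  color_notMem_colorsEndingAt C hjk hkl (h ▸ ⟨_, ⟨rfl, rfl⟩, rfl⟩)

theorem colorSetsEndingAt_injective : Function.Injective (colorSetsEndingAt C) := by
  refine Function.Injective.of_lt_imp_ne fun k l hkl h => ?_
  obtain ⟨j, hjk, hj⟩ : colorsEndingAt C k l ∈ colorSetsEndingAt C k :=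
    h ▸ ⟨k, Set.mem_Iio.2 hkl, rfl⟩
  exact colorsEndingAt_ne C hjk hkl hj

theorem card_le_two_pow_two_pow_of_coloring [Fintype α] [Fintype β]
    (C : (tripleShiftGraph α).Coloring β) : Fintype.card α ≤ 2 ^ 2 ^ Fintype.card β := by
  simpa using Fintype.card_le_of_injective _ (colorSetsEndingAt_injective C)

end tripleShiftGraph

namespace IncTriple

variable {n : ℕ} (t : IncTriple (Fin n))

def signedVec : Fin n → ℤ :=
  Pi.single t.i 1 - Pi.single t.j 1 + Pi.single t.k 1

theorem i_ne_k : t.i ≠ t.k := (t.hij.trans t.hjk).ne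

theorem signedVec_apply (l : Fin n) :
    t.signedVec l = if l = t.i then 1 else if l = t.j then -1 else if l = t.k then 1 else 0 := by
  have := t.hij.ne; have := t.hjk.ne; have := t.i_ne_k
  simp only [signedVec, Pi.add_apply, Pi.sub_apply, Pi.single_apply]
  split_ifs <;> simp_all

theorem signedVec_mem (l : Fin n) :
    t.signedVec l = -1 ∨ t.signedVec l = 0 ∨ t.signedVec l = 1 := by
  rw [signedVec_apply]; split_ifs <;> simp

theorem support_signedVec : univ.filter (t.signedVec · ≠ 0) = {t.i, t.j, t.k} := by
  ext l
  simp only [signedVec_apply, mem_filter, mem_univ, true_and, mem_insert, mem_singleton]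
  split_ifs <;> simp_all

def toJVert : JVert n 3 :=
  ⟨t.signedVec, t.signedVec_mem, by
    rw [support_signedVec, card_eq_three]
    exact ⟨_, _, _, t.hij.ne, t.i_ne_k, t.hjk.ne, rfl⟩⟩

theorem signedVec_dotProduct_shift {i j k l : Fin n} (hij : i < j) (hjk : j < k) (hkl : k < l) :
    (⟨i, j, k, hij, hjk⟩ : IncTriple (Fin n)).signedVec ⬝ᵥ
      (⟨j, k, l, hjk, hkl⟩ : IncTriple (Fin n)).signedVec = -2 := by
  have hik := hij.trans hjk
  have hjl := hjk.trans hkl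
  have hil := hik.trans hkl
  simp [signedVec, dotProduct_add, dotProduct_sub, hij.ne', hjk.ne', hkl.ne',
    hik.ne', hil.ne', hjl.ne']

theorem adj_toJVert {s t : IncTriple (Fin n)} (hi : s.j = t.i) (hj : s.k = t.j) :
    (Jpm n 3 (-2)).Adj s.toJVert t.toJVert := by
  obtain ⟨i, j, k, hij, hjk⟩ := s
  obtain ⟨_, _, l, _, hkl⟩ := t
  subst hi hj
  refine ⟨fun h => ?_, signedVec_dotProduct_shift hij hjk hkl⟩
  have hval := congrArg (fun v : JVert n 3 => v.1 i) h
  simp [toJVert, signedVec_apply, hij.ne, (hij.trans hjk).ne, (hij.trans (hjk.trans hkl)).ne]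
    at hval

end IncTriple

def tripleShiftGraph.homJpm (n : ℕ) : tripleShiftGraph (Fin n) →g Jpm n 3 (-2) where
  toFun := IncTriple.toJVert
  map_rel' := by
    rintro s t ⟨-, h | h⟩
    · exact IncTriple.adj_toJVert h.1 h.2
    · exact (IncTriple.adj_toJVert h.1 h.2).symm

theorem Jpm_three_neg_two_lower_general (n : ℕ) :
    (Nat.clog 2 (Nat.clog 2 n) : ℕ∞) ≤ (Jpm n 3 (-2)).chromaticNumber := by
  refine le_trans ?_ (chromaticNumber_mono_of_hom (tripleShiftGraph.homJpm n))
  refine le_chromaticNumber_iff_coloring.2 fun m C => ?_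
  have hn : n ≤ 2 ^ 2 ^ m := by
    simpa using tripleShiftGraph.card_le_two_pow_two_pow_of_coloring C
  rw [← Nat.clog_le_iff_le_pow one_lt_two, ← Nat.clog_le_iff_le_pow one_lt_two] at hn
  exact_mod_cast hn

/-- `χ(J_±(n,3,-2)) ≥ ⌈log₂⌈log₂ n⌉⌉` for `n ≥ 3`. -/
theorem Jpm_three_neg_two_lower (n : ℕ) (hn : 3 ≤ n) :
    (Nat.clog 2 (Nat.clog 2 n) : ℕ∞) ≤ (Jpm n 3 (-2)).chromaticNumber :=
  Jpm_three_neg_two_lower_general n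
end
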